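/- arXiv:1007.3534 — 5 statements merged into one kernel-verified Lean document; each statement's English description precedes it below -/
import Mathlib

section
/- For n ≥ 2, the residue at w = 0 of (1+w)^n / (w^{n-1}(1+nw)) equals (n² − 1 + (1−n)^n) / n². -/
open PowerSeries Finset

/- Expanding `(1 + n w)⁻¹` geometrically, `n²` times the coefficient of `w^{n-2}` becomes
`∑_{k ≤ n-2} C(n,k) (-n)^{n-k}`: the binomial expansion of `(1 - n)^n` without its last two
terms, `-n²` and `1`. -/

theorem PowerSeries.mk_neg_pow_mul_one_add_C_mul_X {R : Type*} [CommRing R] (a : R) :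
    (mk fun k => (-a) ^ k) * (1 + C a * X) = 1 := by
  have h := congrArg (rescale (-a)) (mk_one_mul_one_sub_eq_one R)
  simpa [rescale_mk, rescale_X, sub_eq_add_neg] using h

theorem PowerSeries.inv_one_add_C_mul_X {K : Type*} [Field K] (a : K) :
    (1 + C a * X)⁻¹ = mk fun k => (-a) ^ k := by
  rw [inv_eq_iff_mul_eq_one (by simp), mk_neg_pow_mul_one_add_C_mul_X]

theorem PowerSeries.coeff_mul_inv_one_add_C_mul_X {K : Type*} [Field K] (f : K⟦X⟧) (a : K)
    (m : ℕ) : coeff m (f * (1 + C a * X)⁻¹) = ∑ k ∈ range (m + 1), coeff k f * (-a) ^ (m - k) := by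
  rw [inv_one_add_C_mul_X, coeff_mul,
    Nat.sum_antidiagonal_eq_sum_range_succ (fun i j => coeff i f * coeff j (mk fun k => (-a) ^ k))]
  simp only [coeff_mk]

theorem PowerSeries.coeff_one_add_X_pow {R : Type*} [CommRing R] (n k : ℕ) :
    coeff k ((1 + X : R⟦X⟧) ^ n) = n.choose k := by
  rw [← binomialSeries_nat (R := ℤ), binomialSeries_coeff]
  simp [Ring.choose_natCast]

theorem sq_mul_sum_range_choose_mul_neg_pow {R : Type*} [CommRing R] (a : R) (m : ℕ) :
    a ^ 2 * ∑ k ∈ range (m + 1), ((m + 2).choose k : R) * (-a) ^ (m - k)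
      = (1 - a) ^ (m + 2) + (m + 2) * a - 1 := by
  have hbinom : (1 - a) ^ (m + 2)
      = ∑ k ∈ range (m + 3), ((m + 2).choose k : R) * (-a) ^ (m + 2 - k) := by
    rw [sub_eq_add_neg, add_pow]
    exact sum_congr rfl fun k _ => by rw [one_pow, one_mul, mul_comm]
  have hshift : ∀ k ∈ range (m + 1), ((m + 2).choose k : R) * (-a) ^ (m + 2 - k)
      = a ^ 2 * (((m + 2).choose k : R) * (-a) ^ (m - k)) := by
    intro k hk
    rw [show m + 2 - k = m - k + 2 by grind, pow_add, neg_sq]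
    ring
  rw [hbinom, sum_range_succ _ (m + 2), sum_range_succ _ (m + 1), sum_congr rfl hshift, ← mul_sum]
  simp only [Nat.choose_succ_self_right, Nat.choose_self, Nat.sub_self,
    show m + 2 - (m + 1) = 1 by omega]
  push_cast
  ring

/-- For `n ≥ 2`, the residue at `w = 0` of
`(1+w)^n / (w^{n-1}(1+nw))`, i.e. the coefficient of `w^{n-2}` in the power series
expansion of `(1+w)^n/(1+nw)`, equals `(n² − 1 + (1−n)^n)/n²`. -/
theorem residue_eps0_hypersurface (n : ℕ) (hn : 2 ≤ n) :
    PowerSeries.coeff (R := ℚ) (n - 2)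
        ((1 + PowerSeries.X) ^ n * (1 + PowerSeries.C (R := ℚ) (n : ℚ) * PowerSeries.X)⁻¹)
      = ((n : ℚ) ^ 2 - 1 + (1 - (n : ℚ)) ^ n) / (n : ℚ) ^ 2 := by
  obtain ⟨m, rfl⟩ : ∃ m, n = m + 2 := ⟨n - 2, by omega⟩
  have hn0 : ((m + 2 : ℕ) : ℚ) ≠ 0 := by positivity
  rw [Nat.add_sub_cancel, coeff_mul_inv_one_add_C_mul_X, eq_div_iff (pow_ne_zero 2 hn0), mul_comm]
  simp only [coeff_one_add_X_pow]
  rw [sq_mul_sum_range_choose_mul_neg_pow]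
  push_cast
  ring
end

section
/- Suppose F(w,q) ∈ P (power series in q with constant term 1 whose coefficients are rational functions in w holomorphic at w = 0) satisfies (Σ_{r=0}^m C_r(q) D_w^r) F(w,q) = A(w,q) for power series C_0,…,C_m ∈ Q[[q]] and A(w,q) ∈ Q(w)[[q]] with A(0,q) = 0. Then (Σ_{s=0}^{m−1} C̃_s(q) D_w^s)(M F)(w,q) = A(w,q)/w, where C̃_s(q) = Σ_{r=s+1}^m binom(r, s+1) C_r(q) D^{r−1−s}F(0,q), D = q d/dq, and M F(w,q) = (1 + (q/w) d/dq)(F(w,q)/F(0,q)). -/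
open PowerSeries Polynomial

noncomputable section

/-- evaluation at `w = 0`, coefficientwise in `q`: `F(w,q) ↦ F(0,q)`. -/
def ev0 (F : PowerSeries (RatFunc ℚ)) : PowerSeries ℚ :=
  PowerSeries.mk fun d => RatFunc.eval (RingHom.id ℚ) 0 (PowerSeries.coeff d F)

/-- the operator `M F = {1 + (q/w) d/dq}(F/F(0,q))`: the coefficient of `q^d` in
`F/F(0,q)` gets multiplied by `(w+d)/w`. -/
def Mop (F : PowerSeries (RatFunc ℚ)) : PowerSeries (RatFunc ℚ) :=
  PowerSeries.mk fun d =>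
    (RatFunc.X + (d : RatFunc ℚ)) / RatFunc.X *
      PowerSeries.coeff d
        (F * PowerSeries.map (algebraMap ℚ (RatFunc ℚ)) (ev0 F)⁻¹)

/-- the operator `D_w = q d/dq + w`. -/
def Dw (F : PowerSeries (RatFunc ℚ)) : PowerSeries (RatFunc ℚ) :=
  PowerSeries.mk fun d => (RatFunc.X + (d : RatFunc ℚ)) * PowerSeries.coeff d F

/-- `D = q d/dq` on `ℚ[[q]]`. -/
def Dq (F : PowerSeries ℚ) : PowerSeries ℚ :=
  PowerSeries.mk fun d => (d : ℚ) * PowerSeries.coeff d F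

end

/-!
Write `F = f · H` with `f = F(0,q)`. Since `f` does not depend on `w`, the Leibniz rule gives
`D_w^r (f H) = Σ_k binom(r,k) D^{r-k} f · D_w^k H`, so the left side of the equation for `F`
becomes `(Σ_r C_r D^r f) H + Σ_s C̃_s D_w^{s+1} H`. Setting `w = 0` in that equation (allowed
because the coefficients of `F` are regular at `0`) and using `A(0,q) = 0` shows that
`Σ_r C_r D^r f = 0`. Finally `M F = w⁻¹ D_w H`, and `D_w` commutes with multiplication by `w⁻¹`.
-/

open Finset

universe u

namespace RatFunc

variable {K L : Type u} [Field K] [Field L]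

def RegularAt (f : K →+* L) (a : L) (x : RatFunc K) : Prop :=
  x.denom.eval₂ f a ≠ 0

variable {f : K →+* L} {a : L}

theorem regularAt_zero : RegularAt f a 0 := by
  simp [RegularAt]

theorem regularAt_algebraMap (p : K[X]) : RegularAt f a (algebraMap K[X] (RatFunc K) p) := by
  simp [RegularAt]

theorem RegularAt.add {x y : RatFunc K} (hx : RegularAt f a x) (hy : RegularAt f a y) :
    RegularAt f a (x + y) := fun h => mul_ne_zero hx hy <| by
  simpa using Polynomial.eval₂_eq_zero_of_dvd_of_eval₂_eq_zero f a (denom_add_dvd x y) h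

theorem RegularAt.mul {x y : RatFunc K} (hx : RegularAt f a x) (hy : RegularAt f a y) :
    RegularAt f a (x * y) := fun h => mul_ne_zero hx hy <| by
  simpa using Polynomial.eval₂_eq_zero_of_dvd_of_eval₂_eq_zero f a (denom_mul_dvd x y) h

theorem regularAt_sum {ι : Type*} (s : Finset ι) {g : ι → RatFunc K}
    (hg : ∀ i ∈ s, RegularAt f a (g i)) : RegularAt f a (∑ i ∈ s, g i) :=
  Finset.sum_induction g (RegularAt f a) (fun _ _ => RegularAt.add) regularAt_zero hg

theorem eval_sum {ι : Type*} (s : Finset ι) {g : ι → RatFunc K}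
    (hg : ∀ i ∈ s, RegularAt f a (g i)) :
    RatFunc.eval f a (∑ i ∈ s, g i) = ∑ i ∈ s, RatFunc.eval f a (g i) := by
  classical
  induction s using Finset.induction_on with
  | empty => simp
  | insert i s hi ih =>
    rw [Finset.forall_mem_insert] at hg
    rw [sum_insert hi, sum_insert hi, eval_add f a hg.1 (regularAt_sum s hg.2), ih hg.2]

theorem eval_algebraMap_mul (p : K[X]) {x : RatFunc K} (hx : RegularAt f a x) :
    RatFunc.eval f a (algebraMap K[X] (RatFunc K) p * x) = p.eval₂ f a * RatFunc.eval f a x := by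
  rw [eval_mul f a (regularAt_algebraMap p) hx, eval_algebraMap, Algebra.algebraMap_self,
    RingHom.id_apply]

end RatFunc

theorem coeff_iterate_Dw (r d : ℕ) (G : PowerSeries (RatFunc ℚ)) :
    coeff d (Dw^[r] G) = (RatFunc.X + (d : RatFunc ℚ)) ^ r * coeff d G := by
  induction r with
  | zero => simp
  | succ n ih => rw [Function.iterate_succ_apply', Dw, coeff_mk, ih, pow_succ', mul_assoc]

theorem coeff_iterate_Dq (r d : ℕ) (g : PowerSeries ℚ) :
    coeff d (Dq^[r] g) = (d : ℚ) ^ r * coeff d g := by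
  induction r with
  | zero => simp
  | succ n ih => rw [Function.iterate_succ_apply', Dq, coeff_mk, ih, pow_succ', mul_assoc]

theorem iterate_Dw_map_mul (g : PowerSeries ℚ) (H : PowerSeries (RatFunc ℚ)) (r : ℕ) :
    Dw^[r] (map (algebraMap ℚ (RatFunc ℚ)) g * H)
      = ∑ k ∈ range (r + 1),
          map (algebraMap ℚ (RatFunc ℚ)) ((r.choose k : ℚ) • Dq^[r - k] g) * Dw^[k] H := by
  ext d
  simp only [coeff_iterate_Dw, PowerSeries.coeff_mul, map_sum, PowerSeries.coeff_map, mul_sum]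
  rw [sum_comm]
  refine sum_congr rfl fun p hp => ?_
  have hd : RatFunc.X + (d : RatFunc ℚ) = (RatFunc.X + (p.2 : RatFunc ℚ)) + (p.1 : RatFunc ℚ) := by
    rw [← mem_antidiagonal.mp hp]; push_cast; ring
  rw [hd, add_pow, sum_mul]
  refine sum_congr rfl fun k _ => ?_
  simp only [PowerSeries.coeff_smul, coeff_iterate_Dq, smul_eq_mul, map_mul, map_pow,
    map_natCast]
  ring

theorem sum_map_mul_iterate_Dw_map_mul (m : ℕ) (Cc : ℕ → PowerSeries ℚ) (g : PowerSeries ℚ)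
    (H : PowerSeries (RatFunc ℚ)) :
    ∑ r ∈ range (m + 1), map (algebraMap ℚ (RatFunc ℚ)) (Cc r) *
        Dw^[r] (map (algebraMap ℚ (RatFunc ℚ)) g * H)
      = map (algebraMap ℚ (RatFunc ℚ)) (∑ r ∈ range (m + 1), Cc r * Dq^[r] g) * H
        + ∑ s ∈ range m, map (algebraMap ℚ (RatFunc ℚ))
            (∑ r ∈ Icc (s + 1) m, (r.choose (s + 1) : ℚ) • (Cc r * Dq^[r - 1 - s] g)) *
            Dw^[s + 1] H := by
  have hterm : ∀ r, map (algebraMap ℚ (RatFunc ℚ)) (Cc r) *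
      Dw^[r] (map (algebraMap ℚ (RatFunc ℚ)) g * H)
        = map (algebraMap ℚ (RatFunc ℚ)) (Cc r * Dq^[r] g) * H
          + ∑ s ∈ range r, map (algebraMap ℚ (RatFunc ℚ))
              ((r.choose (s + 1) : ℚ) • (Cc r * Dq^[r - 1 - s] g)) * Dw^[s + 1] H := by
    intro r
    rw [iterate_Dw_map_mul, sum_range_succ', mul_add, mul_sum, add_comm]
    simp only [← mul_assoc, ← map_mul, mul_smul_comm, Nat.sub_sub, add_comm 1]
    simp
  rw [sum_congr rfl fun r _ => hterm r, sum_add_distrib, ← sum_mul, ← map_sum,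
    sum_comm' (t' := range m) (s' := fun s => Icc (s + 1) m)
      (fun r s => by simp only [mem_range, mem_Icc]; omega)]
  simp only [← sum_mul, ← map_sum]

theorem ev0_sum_map_mul_iterate_Dw (s : Finset ℕ) (Cc : ℕ → PowerSeries ℚ)
    (F : PowerSeries (RatFunc ℚ)) (hF : ∀ d, RatFunc.RegularAt (RingHom.id ℚ) 0 (coeff d F)) :
    ev0 (∑ r ∈ s, map (algebraMap ℚ (RatFunc ℚ)) (Cc r) * Dw^[r] F)
      = ∑ r ∈ s, Cc r * Dq^[r] (ev0 F) := by
  have hpoly : ∀ (c : ℚ) (j r : ℕ) (x : RatFunc ℚ),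
      algebraMap ℚ (RatFunc ℚ) c * ((RatFunc.X + (j : RatFunc ℚ)) ^ r * x)
        = algebraMap ℚ[X] (RatFunc ℚ) (Polynomial.C c * (Polynomial.X + (j : ℚ[X])) ^ r) * x := by
    intro c j r x
    rw [map_mul, map_pow, map_add, map_natCast, RatFunc.algebraMap_X,
      IsScalarTower.algebraMap_apply ℚ ℚ[X] (RatFunc ℚ), Polynomial.algebraMap_eq]
    ring
  ext d
  simp only [ev0, coeff_mk, map_sum, PowerSeries.coeff_mul, PowerSeries.coeff_map,
    coeff_iterate_Dw, coeff_iterate_Dq, hpoly]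
  rw [RatFunc.eval_sum _ fun r _ => RatFunc.regularAt_sum _ fun p _ =>
    (RatFunc.regularAt_algebraMap _).mul (hF p.2)]
  refine sum_congr rfl fun r _ => ?_
  rw [RatFunc.eval_sum _ fun p _ => (RatFunc.regularAt_algebraMap _).mul (hF p.2)]
  refine sum_congr rfl fun p _ => ?_
  rw [RatFunc.eval_algebraMap_mul _ (hF p.2)]
  simp only [Polynomial.eval₂_mul, Polynomial.eval₂_C, Polynomial.eval₂_pow, Polynomial.eval₂_add,
    Polynomial.eval₂_X, Polynomial.eval₂_natCast, RingHom.id_apply, zero_add, mul_assoc]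

theorem iterate_Dw_Mop (F : PowerSeries (RatFunc ℚ)) (s : ℕ) :
    Dw^[s] (Mop F)
      = PowerSeries.C RatFunc.X⁻¹ *
          Dw^[s + 1] (F * map (algebraMap ℚ (RatFunc ℚ)) (ev0 F)⁻¹) := by
  ext d
  rw [coeff_iterate_Dw, PowerSeries.coeff_C_mul, coeff_iterate_Dw, Mop, coeff_mk, div_eq_mul_inv,
    pow_succ]
  ring

theorem ode_descent_general (m : ℕ) (F A : PowerSeries (RatFunc ℚ)) (Cc : ℕ → PowerSeries ℚ)
    (hF1 : PowerSeries.coeff 0 F = 1)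
    (hFhol : ∀ d, ((PowerSeries.coeff d F).denom.eval 0) ≠ 0)
    (hA0 : ∀ d, RatFunc.eval (RingHom.id ℚ) 0 (PowerSeries.coeff d A) = 0)
    (hODE : ∑ r ∈ Finset.range (m + 1),
        PowerSeries.map (algebraMap ℚ (RatFunc ℚ)) (Cc r) * Dw^[r] F = A) :
    ∑ s ∈ Finset.range m,
        PowerSeries.map (algebraMap ℚ (RatFunc ℚ))
          (∑ r ∈ Finset.Icc (s + 1) m,
            (Nat.choose r (s + 1) : ℚ) • (Cc r * Dq^[r - 1 - s] (ev0 F))) *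
          Dw^[s] (Mop F)
      = PowerSeries.C RatFunc.X⁻¹ * A := by
  simp only [iterate_Dw_Mop, mul_left_comm _ (PowerSeries.C _), ← mul_sum]
  congr 1
  set f := ev0 F
  set H := F * map (algebraMap ℚ (RatFunc ℚ)) f⁻¹
  have hfH : map (algebraMap ℚ (RatFunc ℚ)) f * H = F := by
    have hf0 : constantCoeff f ≠ 0 := by simp [f, ev0, ← coeff_zero_eq_constantCoeff_apply, hF1]
    rw [mul_left_comm, ← map_mul, PowerSeries.mul_inv_cancel f hf0, map_one, mul_one]
  have hindicial : ∑ r ∈ range (m + 1), Cc r * Dq^[r] f = 0 := by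
    rw [← ev0_sum_map_mul_iterate_Dw _ _ _ hFhol, hODE]
    ext d
    simpa [ev0] using hA0 d
  rw [← hfH, sum_map_mul_iterate_Dw_map_mul, hindicial, map_zero, zero_mul, zero_add] at hODE
  exact hODE

/-- Lemma `ode_cor`, Corollary 2.2 of Zagier–Zinger.
If `F ∈ P` (constant term 1 in `q`, coefficients holomorphic at `w = 0`) satisfies
`(Σ_{r=0}^m C_r(q) D_w^r) F = A` with `A(0,q) ≡ 0` (and `A` holomorphic at `w = 0`), then
`(Σ_{s=0}^{m−1} C̃_s(q) D_w^s)(M F) = A/w` where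
`C̃_s = Σ_{r=s+1}^m binom(r,s+1) C_r D^{r−1−s} F(0,q)`. -/
theorem ode_descent (m : ℕ) (F A : PowerSeries (RatFunc ℚ)) (Cc : ℕ → PowerSeries ℚ)
    (hF1 : PowerSeries.coeff 0 F = 1)
    (hFhol : ∀ d, ((PowerSeries.coeff d F).denom.eval 0) ≠ 0)
    (hAhol : ∀ d, ((PowerSeries.coeff d A).denom.eval 0) ≠ 0)
    (hA0 : ∀ d, RatFunc.eval (RingHom.id ℚ) 0 (PowerSeries.coeff d A) = 0)
    (hODE : ∑ r ∈ Finset.range (m + 1),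
        PowerSeries.map (algebraMap ℚ (RatFunc ℚ)) (Cc r) * Dw^[r] F = A) :
    ∑ s ∈ Finset.range m,
        PowerSeries.map (algebraMap ℚ (RatFunc ℚ))
          (∑ r ∈ Finset.Icc (s + 1) m,
            (Nat.choose r (s + 1) : ℚ) • (Cc r * Dq^[r - 1 - s] (ev0 F))) *
          Dw^[s] (Mop F)
      = PowerSeries.C RatFunc.X⁻¹ * A :=
  ode_descent_general m F A Cc hF1 hFhol hA0 hODE
end

section
/- With F(w,q) = Σ_{d≥0} q^d ∏_{k=1}^l ∏_{r=1}^{a_k d}(a_k w + r) / ∏_{r=1}^d ((w+r)^n − w^n) and M the operator M F = (1 + (q/w)d/dq)(F/F(0,q)), one has M^n F = F. -/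
open PowerSeries Polynomial

noncomputable section

/-- coefficient of `q^d` in the hypergeometric series
`F(w,q) = Σ_d q^d ∏_k ∏_{r=1}^{a_k d}(a_k w + r) / ∏_{r=1}^d ((w+r)^n − w^n)`. -/
def Fcoeff (n l : ℕ) (a : ℕ → ℕ) (d : ℕ) : RatFunc ℚ :=
  (∏ k ∈ Finset.range l, ∏ r ∈ Finset.range (a k * d),
      ((a k : RatFunc ℚ) * RatFunc.X + ((r : RatFunc ℚ) + 1))) /
  (∏ r ∈ Finset.range d, ((RatFunc.X + ((r : RatFunc ℚ) + 1)) ^ n - RatFunc.X ^ n))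

def Fser (n l : ℕ) (a : ℕ → ℕ) : PowerSeries (RatFunc ℚ) := PowerSeries.mk (Fcoeff n l a)

/-- `I_p(q) = (M^p F)(0,q)`. -/
def Ip (n l : ℕ) (a : ℕ → ℕ) (p : ℕ) : PowerSeries ℚ := ev0 (Mop^[p] (Fser n l a))

end

/-!
Write `θ = q d/dq`, so that `w · M G = (w + θ)(G / I)` with `I = G(0,q)`. `M` preserves `P`
because the coefficients of `q^d`, `d > 0`, in `G / I` vanish at `w = 0`.

Suppose `(w + θ) L G = w^(m+1) F` for an operator `L = ∑_{i ≤ m} a_i (w + θ)^i` whose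
coefficients `a_i ∈ ℚ⟦q⟧` do not depend on `w` and satisfy `a_i ≡ δ_{im} mod q`. At `w = 0`
this says `θ (∑ a_i θ^i I) = 0`, so `∑ a_i θ^i I` is the constant `δ_{m0}`. For `m > 0` the
Leibniz rule moves `I` through `L`, and the vanishing of the resulting order-zero term gives
`L G = L' (w + θ)(G / I) = w L' (M G)` with `L'` of the same shape and order `m - 1`. The
hypergeometric recursion provides such an equation for `F` itself with `m = n - 1`; after
`n - 1` steps `L = a_0` with `a_0 I = 1`, and the equation becomes `w · M G = w F`.
-/

open Finset

namespace RatFunc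

variable {k : Type*} [Field k]

def regularAt (x : k) : Subring (RatFunc k) where
  carrier := {f | f.denom.eval x ≠ 0}
  mul_mem' {f g} hf hg := ne_zero_of_dvd_ne_zero
    (by rw [Polynomial.eval_mul]; exact mul_ne_zero hf hg) (Polynomial.eval_dvd (denom_mul_dvd f g))
  add_mem' {f g} hf hg := ne_zero_of_dvd_ne_zero
    (by rw [Polynomial.eval_mul]; exact mul_ne_zero hf hg) (Polynomial.eval_dvd (denom_add_dvd f g))
  neg_mem' {f} hf := by
    have : (-f).denom ∣ f.denom :=
      (denom_dvd (denom_ne_zero f)).mpr ⟨-f.num, by rw [map_neg, neg_div, num_div_denom]⟩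
    exact ne_zero_of_dvd_ne_zero hf (Polynomial.eval_dvd this)
  one_mem' := by simp
  zero_mem' := by simp

lemma mem_regularAt {x : k} {f : RatFunc k} : f ∈ regularAt x ↔ f.denom.eval x ≠ 0 := Iff.rfl

lemma algebraMap_div_mem_regularAt {x : k} (p : Polynomial k) {q : Polynomial k}
    (hq : q.eval x ≠ 0) :
    algebraMap (Polynomial k) (RatFunc k) p / algebraMap _ _ q ∈ regularAt x :=
  ne_zero_of_dvd_ne_zero hq (Polynomial.eval_dvd (denom_div_dvd p q))

lemma X_mem_regularAt (x : k) : (X : RatFunc k) ∈ regularAt x := by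
  simp [mem_regularAt]

noncomputable def evalAt (x : k) : regularAt x →+* k where
  toFun f := eval (RingHom.id k) x f
  map_one' := eval_one _ _
  map_mul' f g := eval_mul _ _ (by rw [Polynomial.eval₂_id]; exact f.2)
    (by rw [Polynomial.eval₂_id]; exact g.2)
  map_zero' := eval_zero _ _
  map_add' f g := eval_add _ _ (by rw [Polynomial.eval₂_id]; exact f.2)
    (by rw [Polynomial.eval₂_id]; exact g.2)

lemma evalAt_apply (x : k) (f : regularAt x) : evalAt x f = eval (RingHom.id k) x f := rfl

@[simp] lemma evalAt_X (x : k) : evalAt x ⟨X, X_mem_regularAt x⟩ = x := eval_X _ _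

lemma div_X_sub_C_mem_regularAt {x : k} (f : regularAt x) (hf : evalAt x f = 0) :
    (f : RatFunc k) / (X - C x) ∈ regularAt x := by
  have hden : (f : RatFunc k).denom.eval x ≠ 0 := f.2
  have hnum : (f : RatFunc k).num.IsRoot x := by
    rw [evalAt_apply, eval, Polynomial.eval₂_id, Polynomial.eval₂_id, div_eq_zero_iff] at hf
    exact hf.resolve_right hden
  obtain ⟨h, hh⟩ := Polynomial.dvd_iff_isRoot.mpr hnum
  have hX : (X - C x : RatFunc k) = algebraMap _ _ (Polynomial.X - Polynomial.C x) := by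
    rw [map_sub, algebraMap_X, algebraMap_C]
  have : (f : RatFunc k) / (X - C x) = algebraMap _ _ h / algebraMap _ _ (f : RatFunc k).denom := by
    have hX0 : (Polynomial.X - Polynomial.C x) ≠ 0 := Polynomial.X_sub_C_ne_zero x
    conv_lhs => rw [← num_div_denom (f : RatFunc k), hh, map_mul, hX]
    have := algebraMap_ne_zero (K := k) hX0
    have := algebraMap_ne_zero (K := k) (denom_ne_zero (f : RatFunc k))
    field_simp
  rw [this]
  exact algebraMap_div_mem_regularAt _ hden

noncomputable def regularC (x : k) : k →+* regularAt x :=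
  C.codRestrict (regularAt x) fun c => by simp [mem_regularAt, ← algebraMap_C]

lemma evalAt_comp_regularC (x : k) : (evalAt x).comp (regularC x) = RingHom.id k := by
  ext c
  exact eval_C _ _

end RatFunc

namespace PowerSeries

variable {R S : Type*} [CommSemiring R] [CommSemiring S]

/-- `c + q d/dq`. -/
noncomputable def eulerOp (c : R) (F : R⟦X⟧) : R⟦X⟧ := mk fun d => (c + d) * coeff d F

lemma coeff_eulerOp_iterate (c : R) (i d : ℕ) (F : R⟦X⟧) :
    coeff d ((eulerOp c)^[i] F) = (c + d) ^ i * coeff d F := by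
  induction i with
  | zero => simp
  | succ i ih => rw [Function.iterate_succ_apply', eulerOp, coeff_mk, ih]; ring

lemma eulerOp_C_mul (c x : R) (F : R⟦X⟧) : eulerOp c (C x * F) = C x * eulerOp c F := by
  ext d
  simp only [eulerOp, coeff_mk, coeff_C_mul]
  ring

lemma eulerOp_iterate_C_mul (c x : R) (i : ℕ) (F : R⟦X⟧) :
    (eulerOp c)^[i] (C x * F) = C x * (eulerOp c)^[i] F :=
  (Function.Semiconj.iterate_right (fun F => (eulerOp_C_mul c x F).symm) i F).symm

lemma map_eulerOp (f : R →+* S) (c : R) (F : R⟦X⟧) :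
    map f (eulerOp c F) = eulerOp (f c) (map f F) := by
  ext d
  simp [eulerOp]

lemma map_eulerOp_iterate (f : R →+* S) (c : R) (i : ℕ) (F : R⟦X⟧) :
    map f ((eulerOp c)^[i] F) = (eulerOp (f c))^[i] (map f F) :=
  Function.Semiconj.iterate_right (fun F => map_eulerOp f c F) i F

lemma eulerOp_iterate_mul (c : R) (i : ℕ) (H G : R⟦X⟧) :
    (eulerOp c)^[i] (H * G) =
      ∑ j ∈ range (i + 1), i.choose j • ((eulerOp 0)^[i - j] H * (eulerOp c)^[j] G) := by
  ext d
  simp only [coeff_eulerOp_iterate, coeff_mul, map_sum, map_nsmul, zero_add, mul_sum, smul_sum]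
  rw [sum_comm]
  refine sum_congr rfl fun p hp => ?_
  rw [HasAntidiagonal.mem_antidiagonal] at hp
  have : (c + d : R) ^ i = (c + p.2 + p.1) ^ i := by rw [← hp]; push_cast; ring
  rw [this, add_pow, sum_mul]
  refine sum_congr rfl fun j _ => ?_
  rw [nsmul_eq_mul]
  ring


noncomputable def diffOp (c : R) (a : ℕ → R⟦X⟧) (m : ℕ) (G : R⟦X⟧) : R⟦X⟧ :=
  ∑ i ∈ range (m + 1), a i * (eulerOp c)^[i] G

lemma map_diffOp (f : R →+* S) (c : R) (a : ℕ → R⟦X⟧) (m : ℕ) (G : R⟦X⟧) :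
    map f (diffOp c a m G) = diffOp (f c) (fun i => map f (a i)) m (map f G) := by
  simp only [diffOp, map_sum, map_mul, map_eulerOp_iterate]

lemma diffOp_C_mul (c x : R) (a : ℕ → R⟦X⟧) (m : ℕ) (G : R⟦X⟧) :
    diffOp c a m (C x * G) = C x * diffOp c a m G := by
  simp only [diffOp, eulerOp_iterate_C_mul, mul_sum, mul_left_comm]

noncomputable def diffOpMulCoeff (a : ℕ → R⟦X⟧) (m : ℕ) (H : R⟦X⟧) (j : ℕ) : R⟦X⟧ :=
  ∑ i ∈ range (m + 1), i.choose j • (a i * (eulerOp 0)^[i - j] H)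

lemma diffOp_mul (c : R) (a : ℕ → R⟦X⟧) (m : ℕ) (H G : R⟦X⟧) :
    diffOp c a m (H * G) = diffOp c (diffOpMulCoeff a m H) m G := by
  have extend : ∀ i ∈ range (m + 1),
      a i * (eulerOp c)^[i] (H * G) = ∑ j ∈ range (m + 1),
        a i * i.choose j • ((eulerOp 0)^[i - j] H * (eulerOp c)^[j] G) := by
    intro i hi
    rw [eulerOp_iterate_mul, mul_sum]
    refine sum_subset (range_subset_range.mpr (by simpa using hi)) fun j _ hj => ?_
    rw [Nat.choose_eq_zero_of_lt (by simpa using hj), zero_smul, mul_zero]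
  rw [diffOp, sum_congr rfl extend, sum_comm, diffOp]
  refine sum_congr rfl fun j _ => ?_
  rw [diffOpMulCoeff, sum_mul]
  refine sum_congr rfl fun i _ => ?_
  rw [mul_smul_comm, smul_mul_assoc, mul_assoc]

lemma map_diffOpMulCoeff (f : R →+* S) (a : ℕ → R⟦X⟧) (m : ℕ) (H : R⟦X⟧) (j : ℕ) :
    map f (diffOpMulCoeff a m H j) = diffOpMulCoeff (fun i => map f (a i)) m (map f H) j := by
  simp only [diffOpMulCoeff, map_sum, map_nsmul, map_mul, map_eulerOp_iterate, map_zero]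

lemma diffOpMulCoeff_zero (a : ℕ → R⟦X⟧) (m : ℕ) (H : R⟦X⟧) :
    diffOpMulCoeff a m H 0 = diffOp 0 a m H := by
  simp [diffOpMulCoeff, diffOp]

lemma diffOp_succ_of_eq_zero (c : R) (a : ℕ → R⟦X⟧) (m : ℕ) (G : R⟦X⟧) (ha : a 0 = 0) :
    diffOp c a (m + 1) G = diffOp c (fun j => a (j + 1)) m (eulerOp c G) := by
  simp only [diffOp, sum_range_succ' _ (m + 1), ha, zero_mul, add_zero,
    Function.iterate_succ_apply]

lemma constantCoeff_eulerOp_zero_iterate (i : ℕ) (H : R⟦X⟧) :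
    constantCoeff ((eulerOp 0)^[i] H) = 0 ^ i * constantCoeff H := by
  simpa using coeff_eulerOp_iterate (0 : R) i 0 H

lemma constantCoeff_diffOp_zero (a : ℕ → R⟦X⟧) (m : ℕ) (H : R⟦X⟧) :
    constantCoeff (diffOp 0 a m H) = constantCoeff (a 0) * constantCoeff H := by
  rw [diffOp, map_sum, sum_range_succ']
  simp only [map_mul, constantCoeff_eulerOp_zero_iterate]
  simp

lemma constantCoeff_diffOpMulCoeff (a : ℕ → R⟦X⟧) (m : ℕ) {H : R⟦X⟧}
    (hH : constantCoeff H = 1) (j : ℕ) :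
    constantCoeff (diffOpMulCoeff a m H j) = if j ≤ m then constantCoeff (a j) else 0 := by
  have term : ∀ i, constantCoeff (i.choose j • (a i * (eulerOp 0)^[i - j] H)) =
      if j = i then constantCoeff (a i) else 0 := by
    intro i
    rw [map_nsmul, map_mul, constantCoeff_eulerOp_zero_iterate, hH, mul_one]
    rcases lt_trichotomy i j with hij | rfl | hji
    · simp [Nat.choose_eq_zero_of_lt hij, hij.ne']
    · simp
    · simp [hji.ne, Nat.sub_ne_zero_of_lt hji]
  simp only [diffOpMulCoeff, map_sum, term, sum_ite_eq, mem_range, Nat.lt_succ_iff]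

lemma eq_C_of_eulerOp_zero_eq_zero [NoZeroDivisors R] [CharZero R] {F : R⟦X⟧}
    (h : eulerOp 0 F = 0) : F = C (constantCoeff F) := by
  ext d
  rcases d with _ | d
  · simp
  · have hd := congrArg (coeff (d + 1)) h
    simp only [eulerOp, coeff_mk, zero_add, map_zero, mul_eq_zero, Nat.cast_eq_zero,
      Nat.add_one_ne_zero, false_or] at hd
    simp [hd]

end PowerSeries

local notation "K" => RatFunc ℚ
local notation "𝒪" => RatFunc.regularAt (0 : ℚ)
local notation "ι" => PowerSeries.map (algebraMap ℚ (RatFunc ℚ))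
local notation "ȷ" => PowerSeries.map (Subring.subtype (RatFunc.regularAt (0 : ℚ)))
local notation "ε" => PowerSeries.map (RatFunc.evalAt (0 : ℚ))
local notation "κ" => PowerSeries.map (RatFunc.regularC (0 : ℚ))

/-- The group `P` of the paper. -/
def unitSeries : Set K⟦X⟧ :=
  {G | ∃ Φ : 𝒪⟦X⟧, ȷ Φ = G ∧ constantCoeff Φ = 1}

lemma ev0_map_subtype (Φ : 𝒪⟦X⟧) : ev0 (ȷ Φ) = ε Φ := by
  ext d
  simp [ev0, RatFunc.evalAt_apply]

lemma map_subtype_map_regularC (A : ℚ⟦X⟧) : ȷ (κ A) = ι A := by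
  rw [← RingHom.comp_apply, ← PowerSeries.map_comp, RingHom.ext_rat ((𝒪).subtype.comp _)]

lemma map_evalAt_map_regularC (A : ℚ⟦X⟧) : ε (κ A) = A := by
  rw [← RingHom.comp_apply, ← PowerSeries.map_comp, RatFunc.evalAt_comp_regularC,
    PowerSeries.map_id]
  rfl

lemma constantCoeff_ev0 {G : K⟦X⟧} (hG : G ∈ unitSeries) : constantCoeff (ev0 G) = 1 := by
  obtain ⟨Φ, rfl, hΦ⟩ := hG
  rw [ev0_map_subtype, ← coeff_zero_eq_constantCoeff_apply, PowerSeries.coeff_map,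
    coeff_zero_eq_constantCoeff_apply, hΦ, map_one]

lemma ev0_mul_inv {G : K⟦X⟧} (hG : G ∈ unitSeries) : ev0 G * (ev0 G)⁻¹ = 1 :=
  PowerSeries.mul_inv_cancel _ (by rw [constantCoeff_ev0 hG]; exact one_ne_zero)

lemma C_X_mul_Mop (G : K⟦X⟧) :
    PowerSeries.C RatFunc.X * Mop G = eulerOp RatFunc.X (G * ι (ev0 G)⁻¹) := by
  ext d
  have : (RatFunc.X : K) ≠ 0 := RatFunc.X_ne_zero
  simp only [PowerSeries.coeff_C_mul, Mop, eulerOp, coeff_mk]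
  field_simp

lemma Mop_mem_unitSeries {G : K⟦X⟧} (hG : G ∈ unitSeries) : Mop G ∈ unitSeries := by
  have hI := ev0_mul_inv hG
  have hI0 := constantCoeff_ev0 hG
  obtain ⟨Φ, rfl, hΦ⟩ := hG
  set Θ := Φ * κ (ev0 (ȷ Φ))⁻¹
  have hlift : ȷ Θ = ȷ Φ * ι (ev0 (ȷ Φ))⁻¹ := by
    rw [map_mul, map_subtype_map_regularC]
  have hΘ : ε Θ = 1 := by
    rw [map_mul, map_evalAt_map_regularC, ← ev0_map_subtype, hI]
  have mem : ∀ d : ℕ,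
      (RatFunc.X + (d : K)) / RatFunc.X * ((PowerSeries.coeff d Θ : 𝒪) : K) ∈ 𝒪 := by
    intro d
    rcases Nat.eq_zero_or_pos d with rfl | hd
    · simp [RatFunc.X_ne_zero]
    · have h0 : RatFunc.evalAt 0 (PowerSeries.coeff d Θ) = 0 := by
        rw [← PowerSeries.coeff_map, hΘ, PowerSeries.coeff_one, if_neg hd.ne']
      have hdiv := RatFunc.div_X_sub_C_mem_regularAt _ h0
      rw [map_zero, sub_zero] at hdiv
      rw [div_mul_comm, mul_comm]
      exact mul_mem (add_mem (RatFunc.X_mem_regularAt 0) (natCast_mem _ d)) hdiv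
  refine ⟨mk fun d => ⟨_, mem d⟩, ?_, ?_⟩
  · ext d
    rw [PowerSeries.coeff_map, coeff_mk, Mop, coeff_mk, ← hlift, PowerSeries.coeff_map]
    rfl
  · apply Subtype.ext
    rw [← coeff_zero_eq_constantCoeff_apply, coeff_mk]
    have hΘ0 : constantCoeff Θ = 1 := by
      rw [map_mul, hΦ, one_mul]
      change RatFunc.regularC 0 (constantCoeff (ev0 (ȷ Φ))⁻¹) = 1
      rw [constantCoeff_inv, hI0, inv_one, map_one]
    simp [RatFunc.X_ne_zero, hΘ0]

def HasEquation (F : K⟦X⟧) (m : ℕ) (G : K⟦X⟧) : Prop :=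
  ∃ a : ℕ → ℚ⟦X⟧, (∀ i, constantCoeff (a i) = if i = m then 1 else 0) ∧
    eulerOp RatFunc.X (diffOp RatFunc.X (fun i => ι (a i)) m G) =
      PowerSeries.C (RatFunc.X ^ (m + 1)) * F

lemma diffOp_ev0_eq_C {F G : K⟦X⟧} (hF : F ∈ unitSeries) (hG : G ∈ unitSeries) {m : ℕ}
    {a : ℕ → ℚ⟦X⟧}
    (h : eulerOp RatFunc.X (diffOp RatFunc.X (fun i => ι (a i)) m G) =
      PowerSeries.C (RatFunc.X ^ (m + 1)) * F) :
    diffOp 0 a m (ev0 G) = PowerSeries.C (constantCoeff (a 0)) := by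
  have hI := constantCoeff_ev0 hG
  obtain ⟨Φ, rfl, -⟩ := hG
  obtain ⟨Ψ, rfl, -⟩ := hF
  set w : 𝒪 := ⟨RatFunc.X, RatFunc.X_mem_regularAt 0⟩
  have lhs : eulerOp RatFunc.X (diffOp RatFunc.X (fun i => ι (a i)) m (ȷ Φ)) =
      ȷ (eulerOp w (diffOp w (fun i => κ (a i)) m Φ)) := by
    simp only [map_eulerOp, map_diffOp, map_subtype_map_regularC]
    rfl
  have rhs : PowerSeries.C (RatFunc.X ^ (m + 1)) * ȷ Ψ = ȷ (PowerSeries.C (w ^ (m + 1)) * Ψ) := by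
    rw [map_mul, PowerSeries.map_C]
    rfl
  have h0 := congrArg ev0 h
  rw [lhs, rhs, ev0_map_subtype, ev0_map_subtype, map_eulerOp, map_diffOp, map_mul,
    PowerSeries.map_C, map_pow, RatFunc.evalAt_X] at h0
  simp only [map_evalAt_map_regularC, zero_pow (Nat.succ_ne_zero m), map_zero, zero_mul] at h0
  rw [← ev0_map_subtype] at h0
  rw [eq_C_of_eulerOp_zero_eq_zero h0, constantCoeff_diffOp_zero, hI, mul_one]

lemma C_X_ne_zero : (PowerSeries.C (RatFunc.X : K)) ≠ 0 :=
  (map_ne_zero_iff _ PowerSeries.C_injective).mpr RatFunc.X_ne_zero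

lemma hasEquation_Mop {F G : K⟦X⟧} (hF : F ∈ unitSeries) (hG : G ∈ unitSeries) {m : ℕ}
    (h : HasEquation F (m + 1) G) : HasEquation F m (Mop G) := by
  obtain ⟨a, ha, heq⟩ := h
  set I := ev0 G
  set b := diffOpMulCoeff a (m + 1) I with hb
  have hb0 : b 0 = 0 := by
    rw [hb, diffOpMulCoeff_zero, diffOp_ev0_eq_C hF hG heq, ha, if_neg (Nat.succ_ne_zero m).symm,
      map_zero]
  refine ⟨fun j => b (j + 1), fun j => ?_, ?_⟩
  · rw [constantCoeff_diffOpMulCoeff _ _ (constantCoeff_ev0 hG), ha]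
    by_cases hj : j = m <;> simp [hj]
  · have hsplit : ι I * (G * ι I⁻¹) = G := by
      rw [mul_left_comm, ← map_mul, ev0_mul_inv hG, map_one, mul_one]
    have key : diffOp RatFunc.X (fun i => ι (a i)) (m + 1) G =
        PowerSeries.C RatFunc.X * diffOp RatFunc.X (fun j => ι (b (j + 1))) m (Mop G) := by
      calc diffOp RatFunc.X (fun i => ι (a i)) (m + 1) G
          = diffOp RatFunc.X (fun i => ι (a i)) (m + 1) (ι I * (G * ι I⁻¹)) := by rw [hsplit]
        _ = diffOp RatFunc.X (fun j => ι (b j)) (m + 1) (G * ι I⁻¹) := by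
          simp only [diffOp_mul, b, map_diffOpMulCoeff]
        _ = diffOp RatFunc.X (fun j => ι (b (j + 1))) m (eulerOp RatFunc.X (G * ι I⁻¹)) :=
          diffOp_succ_of_eq_zero _ _ _ _ (by rw [hb0, map_zero])
        _ = _ := by rw [← C_X_mul_Mop, diffOp_C_mul]
    rw [key, eulerOp_C_mul, pow_succ', map_mul, mul_assoc] at heq
    exact mul_left_cancel₀ C_X_ne_zero heq

lemma Mop_eq_of_hasEquation_zero {F G : K⟦X⟧} (hF : F ∈ unitSeries) (hG : G ∈ unitSeries)
    (h : HasEquation F 0 G) : Mop G = F := by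
  obtain ⟨a, ha, heq⟩ := h
  have h0 := diffOp_ev0_eq_C hF hG heq
  rw [ha, if_pos rfl, map_one] at h0
  have ha0 : a 0 = (ev0 G)⁻¹ := by
    rw [PowerSeries.eq_inv_iff_mul_eq_one (by rw [constantCoeff_ev0 hG]; exact one_ne_zero)]
    simpa [diffOp] using h0
  simp only [diffOp, zero_add, range_one, sum_singleton, Function.iterate_zero_apply, ha0,
    mul_comm (ι _), pow_one] at heq
  rw [← C_X_mul_Mop] at heq
  exact mul_left_cancel₀ C_X_ne_zero heq

noncomputable def hgPoly (l : ℕ) (a : ℕ → ℕ) : ℚ[X] :=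
  ∏ k ∈ range l, ∏ j ∈ range (a k),
    (Polynomial.C (a k : ℚ) * Polynomial.X + Polynomial.C ((j : ℚ) + 1))

noncomputable def hgNum (l : ℕ) (a : ℕ → ℕ) (d : ℕ) : ℚ[X] :=
  ∏ k ∈ range l, ∏ r ∈ range (a k * d),
    (Polynomial.C (a k : ℚ) * Polynomial.X + Polynomial.C ((r : ℚ) + 1))

noncomputable def hgDen (n d : ℕ) : ℚ[X] :=
  ∏ r ∈ range d, ((Polynomial.X + Polynomial.C ((r : ℚ) + 1)) ^ n - Polynomial.X ^ n)

lemma algebraMap_hgDen (n d : ℕ) : algebraMap ℚ[X] K (hgDen n d) =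
    ∏ r ∈ range d, ((RatFunc.X + ((r : K) + 1)) ^ n - RatFunc.X ^ n) := by
  simp [hgDen, map_prod]

lemma Fcoeff_eq_div (n l : ℕ) (a : ℕ → ℕ) (d : ℕ) :
    Fcoeff n l a d = algebraMap ℚ[X] K (hgNum l a d) / algebraMap ℚ[X] K (hgDen n d) := by
  simp [Fcoeff, hgNum, hgDen, map_prod]

lemma hgDen_eval_zero_ne_zero {n : ℕ} (hn : n ≠ 0) (d : ℕ) : (hgDen n d).eval 0 ≠ 0 := by
  simp only [hgDen, Polynomial.eval_prod, Polynomial.eval_sub, Polynomial.eval_pow,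
    Polynomial.eval_add, Polynomial.eval_X, Polynomial.eval_C, zero_add, zero_pow hn, sub_zero]
  exact prod_ne_zero_iff.mpr fun r _ => by positivity

lemma Fcoeff_succ {n : ℕ} (hn : n ≠ 0) (l : ℕ) (a : ℕ → ℕ) (d : ℕ) :
    ((RatFunc.X + ((d : K) + 1)) ^ n - RatFunc.X ^ n) * Fcoeff n l a (d + 1) =
      Polynomial.aeval (RatFunc.X + (d : K)) (hgPoly l a) * Fcoeff n l a d := by
  have hden : algebraMap ℚ[X] K (hgDen n (d + 1)) ≠ 0 := RatFunc.algebraMap_ne_zero fun h =>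
    hgDen_eval_zero_ne_zero hn (d + 1) (by rw [h, Polynomial.eval_zero])
  rw [algebraMap_hgDen, prod_range_succ, mul_ne_zero_iff] at hden
  have hnum : ∏ k ∈ range l, ∏ r ∈ range (a k * (d + 1)), ((a k : K) * RatFunc.X + ((r : K) + 1)) =
      (∏ k ∈ range l, ∏ r ∈ range (a k * d), ((a k : K) * RatFunc.X + ((r : K) + 1))) *
        Polynomial.aeval (RatFunc.X + (d : K)) (hgPoly l a) := by
    rw [hgPoly, map_prod, ← prod_mul_distrib]
    refine prod_congr rfl fun k _ => ?_
    rw [Nat.mul_succ, prod_range_add, map_prod]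
    congr 1
    refine prod_congr rfl fun j _ => ?_
    simp only [map_add, map_mul, Polynomial.aeval_X, map_natCast, map_one, Nat.cast_add,
      Nat.cast_mul]
    ring
  rw [Fcoeff, Fcoeff, hnum, prod_range_succ]
  obtain ⟨h1, h2⟩ := hden
  field_simp

lemma Fser_mem_unitSeries {n : ℕ} (hn : n ≠ 0) (l : ℕ) (a : ℕ → ℕ) : Fser n l a ∈ unitSeries := by
  refine ⟨mk fun d => ⟨Fcoeff n l a d, ?_⟩, ?_, ?_⟩
  · rw [Fcoeff_eq_div]
    exact RatFunc.algebraMap_div_mem_regularAt _ (hgDen_eval_zero_ne_zero hn d)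
  · ext d
    simp [Fser]
  · apply Subtype.ext
    simp [Fcoeff]

lemma hgPoly_isRoot {l : ℕ} {a : ℕ → ℕ} (hl : 0 < l) (ha : 0 < a 0) :
    (hgPoly l a).IsRoot (-1) := by
  rw [Polynomial.IsRoot, hgPoly, Polynomial.eval_prod]
  refine prod_eq_zero (mem_range.mpr hl) ?_
  rw [Polynomial.eval_prod]
  refine prod_eq_zero (mem_range.mpr (Nat.sub_lt ha one_pos)) ?_
  simp [Nat.cast_pred ha]

lemma natDegree_hgPoly_le (l : ℕ) (a : ℕ → ℕ) : (hgPoly l a).natDegree ≤ ∑ k ∈ range l, a k := by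
  refine (Polynomial.natDegree_prod_le _ _).trans (sum_le_sum fun k _ => ?_)
  refine (Polynomial.natDegree_prod_le _ _).trans ((sum_le_sum fun j _ =>
    Polynomial.natDegree_linear_le).trans ?_)
  rw [sum_const, card_range, smul_eq_mul, mul_one]

noncomputable def hgQuot (l : ℕ) (a : ℕ → ℕ) : ℚ[X] :=
  hgPoly l a /ₘ (Polynomial.X - Polynomial.C (-1))

lemma aeval_hgPoly {l : ℕ} {a : ℕ → ℕ} (hl : 0 < l) (ha : 0 < a 0) (x : K) :
    Polynomial.aeval x (hgPoly l a) = (x + 1) * Polynomial.aeval x (hgQuot l a) := by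
  conv_lhs => rw [← Polynomial.mul_divByMonic_eq_iff_isRoot.mpr (hgPoly_isRoot hl ha)]
  simp [hgQuot]

lemma natDegree_hgQuot_lt {l : ℕ} {a : ℕ → ℕ} (hl : 0 < l) (ha : 0 < a 0) :
    (hgQuot l a).natDegree < ∑ k ∈ range l, a k := by
  have hpos : 0 < ∑ k ∈ range l, a k :=
    sum_pos' (fun _ _ => Nat.zero_le _) ⟨0, mem_range.mpr hl, ha⟩
  rw [hgQuot, Polynomial.natDegree_divByMonic _ (Polynomial.monic_X_sub_C _),
    Polynomial.natDegree_X_sub_C]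
  have := natDegree_hgPoly_le l a
  omega

/-- With `θ = q d/dq`, the recursion reads `((w + θ)^n - w^n) F = q hgPoly(w + θ) F`; since
`q (w + θ + 1) = (w + θ) q`, this factors as `(w + θ) ((w + θ)^(n-1) - q hgQuot(w + θ)) F = w^n F`.
-/
lemma hasEquation_Fser {n l : ℕ} {a : ℕ → ℕ} (hl : 0 < l) (ha : 0 < a 0)
    (hsum : ∑ k ∈ range l, a k = n) : HasEquation (Fser n l a) (n - 1) (Fser n l a) := by
  have hn : 0 < n := hsum ▸ sum_pos' (fun _ _ => Nat.zero_le _) ⟨0, mem_range.mpr hl, ha⟩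
  set F := Fser n l a
  refine ⟨fun i => PowerSeries.C (if i = n - 1 then 1 else 0) -
      PowerSeries.X * PowerSeries.C ((hgQuot l a).coeff i),
    fun i => by simp, ?_⟩
  have hop : diffOp RatFunc.X (fun i => ι (PowerSeries.C (if i = n - 1 then 1 else 0) -
        PowerSeries.X * PowerSeries.C ((hgQuot l a).coeff i))) (n - 1) F =
      (eulerOp RatFunc.X)^[n - 1] F - PowerSeries.X * ∑ i ∈ range n,
        PowerSeries.C (algebraMap ℚ K ((hgQuot l a).coeff i)) * (eulerOp RatFunc.X)^[i] F := by
    simp [diffOp, Nat.sub_add_cancel hn, sub_mul, sum_sub_distrib, mul_sum, mul_assoc, apply_ite,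
      ite_mul, hn]
  have hQ : ∀ d, coeff d (∑ i ∈ range n,
      PowerSeries.C (algebraMap ℚ K ((hgQuot l a).coeff i)) * (eulerOp RatFunc.X)^[i] F) =
        Polynomial.aeval (RatFunc.X + (d : K)) (hgQuot l a) * Fcoeff n l a d := by
    intro d
    rw [Polynomial.aeval_eq_sum_range' ((natDegree_hgQuot_lt hl ha).trans_eq hsum), sum_mul,
      map_sum]
    refine sum_congr rfl fun i _ => ?_
    rw [PowerSeries.coeff_C_mul, coeff_eulerOp_iterate, Algebra.smul_def, mul_assoc]
    simp only [F, Fser, coeff_mk]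
  rw [hop]
  ext d
  rcases d with _ | e
  · simp [eulerOp, coeff_eulerOp_iterate, F, Fser]
    ring
  · have hpow : (RatFunc.X + ((e : K) + 1)) ^ n =
        (RatFunc.X + ((e : K) + 1)) * (RatFunc.X + ((e : K) + 1)) ^ (n - 1) := by
      rw [← pow_succ', Nat.sub_add_cancel hn]
    simp only [eulerOp, coeff_mk, map_sub, PowerSeries.coeff_succ_X_mul, hQ,
      coeff_eulerOp_iterate, PowerSeries.coeff_C_mul, Nat.sub_add_cancel hn]
    simp only [F, Fser, coeff_mk, Nat.cast_succ]
    linear_combination Fcoeff_succ hn.ne' l a e +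
      Fcoeff n l a e * aeval_hgPoly hl ha (RatFunc.X + (e : K)) - Fcoeff n l a (e + 1) * hpow

/-- Lemma `HGper_lmm`. `M^n F = F` for the hypergeometric series `F`. -/
theorem M_iterate_n_eq_self (n l : ℕ) (a : ℕ → ℕ) (hl : 0 < l)
    (ha : ∀ k < l, 2 ≤ a k) (hsum : ∑ k ∈ Finset.range l, a k = n) :
    Mop^[n] (Fser n l a) = Fser n l a := by
  have ha0 : 0 < a 0 := (ha 0 hl).trans_lt' two_pos
  have hbase := hasEquation_Fser hl ha0 hsum
  obtain ⟨m, rfl⟩ := Nat.exists_eq_add_one_of_ne_zero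
    (hsum ▸ sum_pos' (fun _ _ => Nat.zero_le _) ⟨0, mem_range.mpr hl, ha0⟩).ne'
  have hF := Fser_mem_unitSeries (Nat.succ_ne_zero m) l a
  have descent : ∀ p ≤ m, Mop^[p] (Fser (m + 1) l a) ∈ unitSeries ∧
      HasEquation (Fser (m + 1) l a) (m - p) (Mop^[p] (Fser (m + 1) l a)) := by
    intro p hp
    induction p with
    | zero => exact ⟨hF, hbase⟩
    | succ p ih =>
      obtain ⟨hG, hE⟩ := ih (by omega)
      rw [show m - p = m - (p + 1) + 1 by omega] at hE
      rw [Function.iterate_succ_apply']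
      exact ⟨Mop_mem_unitSeries hG, hasEquation_Mop hF hG hE⟩
  obtain ⟨hG, hE⟩ := descent m le_rfl
  rw [Nat.sub_self] at hE
  rw [Function.iterate_succ_apply']
  exact Mop_eq_of_hasEquation_zero hF hG hE
end

section
/- Define rational numbers ξ_s by ∏_{k=1}^l ∏_{j=1}^{a_k}(a_k D + j) = a^a Σ_{s=0}^n ξ_s D^s in the polynomial ring Q[D]. Then ξ_n = 1, ξ_{n−1} = (n+l)/2, and ξ_{n−2} = −(1/12)Σ_{r=1}^l 1/a_r + (3n² + n(6l−4) + 3l² − 6l)/24. -/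
open Polynomial


lemma sum1 (a : ℕ) : ∑ j ∈ Finset.range a, ((j:ℚ)+1) = (a:ℚ)*((a:ℚ)+1)/2 := by
  induction a with
  | zero => simp
  | succ n ih => rw [Finset.sum_range_succ, ih]; push_cast; ring

lemma sum2 (a : ℕ) : ∑ j ∈ Finset.range a, ((j:ℚ)+1)^2 = (a:ℚ)*((a:ℚ)+1)*(2*(a:ℚ)+1)/6 := by
  induction a with
  | zero => simp
  | succ n ih => rw [Finset.sum_range_succ, ih]; push_cast; ring

lemma mymonic (s : Multiset ℚ) : ((s.map fun r => X + C r).prod).Monic := by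
  exact monic_multiset_prod_of_monic s _ (fun r _ => monic_X_add_C r)

lemma mynatdeg (s : Multiset ℚ) :
    ((s.map fun r => X + C r).prod).natDegree = Multiset.card s := by
  rw [natDegree_multiset_prod_of_monic]
  · simp [Multiset.map_map, Function.comp]
  · intro f hf
    obtain ⟨r, _, rfl⟩ := Multiset.mem_map.mp hf
    exact monic_X_add_C r


lemma coeff_top (s : Multiset ℚ) :
    ((s.map fun r => X + C r).prod).coeff (Multiset.card s) = 1 := by
  have := (mymonic s).coeff_natDegree
  rwa [mynatdeg] at this

lemma coeff_above (s : Multiset ℚ) {k : ℕ} (hk : Multiset.card s < k) :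
    ((s.map fun r => X + C r).prod).coeff k = 0 := by
  apply coeff_eq_zero_of_natDegree_lt
  rwa [mynatdeg]

lemma key (s : Multiset ℚ) : ∀ m : ℕ, Multiset.card s = m + 2 →
    ((s.map fun r => X + C r).prod).coeff (m+2) = 1 ∧
    ((s.map fun r => X + C r).prod).coeff (m+1) = s.sum ∧
    ((s.map fun r => X + C r).prod).coeff m
      = (s.sum^2 - (s.map (fun r => r^2)).sum)/2 := by
  induction s using Multiset.induction with
  | empty => intro m hm; simp at hm
  | cons a s ih =>
    intro m hm
    simp only [Multiset.card_cons] at hm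
    have hcs : Multiset.card s = m + 1 := by omega
    have hP : ((a ::ₘ s).map fun r => X + C r).prod
        = X * (s.map fun r => X + C r).prod + C a * (s.map fun r => X + C r).prod := by
      rw [Multiset.map_cons, Multiset.prod_cons]; ring
    match m with
    | 0 =>
      obtain ⟨b, rfl⟩ := Multiset.card_eq_one.mp hcs
      simp only [hP]
      simp only [Multiset.map_singleton, Multiset.prod_singleton, Multiset.sum_cons,
        Multiset.sum_singleton]
      constructor
      · simp [coeff_add, coeff_X_mul, coeff_C_mul, coeff_X, coeff_C]; try ring
      constructor
      · simp [coeff_add, coeff_X_mul, coeff_C_mul, coeff_X, coeff_C]; try ring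
      · simp only [Multiset.map_cons, Multiset.map_singleton, Multiset.sum_cons,
          Multiset.sum_singleton]
        have h0 : (X * (X + C b) + C a * (X + C b)).coeff 0 = a * b := by
          simp [coeff_add, coeff_C_mul, coeff_X, coeff_C, mul_coeff_zero]
        rw [h0]; ring
    | m+1 =>
      obtain ⟨h1, h2, h3⟩ := ih m hcs
      have htop : ((s.map fun r => X + C r).prod).coeff (m+3) = 0 :=
        coeff_above s (by omega)
      rw [hcs] at *
      refine ⟨?_, ?_, ?_⟩
      · simp only [hP, coeff_add, coeff_X_mul, coeff_C_mul]
        rw [h1, htop]; ring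
      · simp only [hP, coeff_add, coeff_X_mul, coeff_C_mul]
        rw [h1, h2, Multiset.sum_cons]; ring
      · simp only [hP, coeff_add, coeff_X_mul, coeff_C_mul]
        rw [h2, h3, Multiset.sum_cons, Multiset.map_cons, Multiset.sum_cons]; ring

/-- eq. (xi_e). If `ξ_0,…,ξ_n ∈ ℚ` are defined by
`∏_{k=1}^l ∏_{j=1}^{a_k}(a_k D + j) = a^a Σ_{s=0}^n ξ_s D^s` in `ℚ[D]`, where
`a_1,…,a_l ≥ 2` and `n = a_1 + ⋯ + a_l`, then `ξ_n = 1`, `ξ_{n−1} = (n+l)/2` and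
`ξ_{n−2} = −(1/12)Σ_r 1/a_r + (3n² + n(6l−4) + 3l² − 6l)/24`. -/
theorem xi_top_coefficients (n l : ℕ) (a : ℕ → ℕ) (hl : 0 < l)
    (ha : ∀ k < l, 2 ≤ a k) (hsum : ∑ k ∈ Finset.range l, a k = n)
    (ξ : ℕ → ℚ)
    (hxi : ∏ k ∈ Finset.range l, ∏ j ∈ Finset.range (a k),
        (Polynomial.C (a k : ℚ) * Polynomial.X + Polynomial.C ((j : ℚ) + 1))
      = Polynomial.C (∏ k ∈ Finset.range l, (a k : ℚ) ^ (a k)) *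
          ∑ s ∈ Finset.range (n + 1), Polynomial.C (ξ s) * Polynomial.X ^ s) :
    ξ n = 1 ∧
    ξ (n - 1) = ((n : ℚ) + (l : ℚ)) / 2 ∧
    ξ (n - 2) = -(1 / 12) * ∑ r ∈ Finset.range l, 1 / (a r : ℚ)
        + (3 * (n : ℚ) ^ 2 + (n : ℚ) * (6 * (l : ℚ) - 4) + 3 * (l : ℚ) ^ 2 - 6 * (l : ℚ)) / 24 := by
  -- a_k ≠ 0 as rationals
  have hane : ∀ k < l, ((a k : ℚ)) ≠ 0 := by
    intro k hk
    have := ha k hk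
    positivity
  -- n ≥ 2
  have hn2 : 2 ≤ n := by
    have h0 : a 0 ≤ ∑ k ∈ Finset.range l, a k :=
      Finset.single_le_sum (f := a) (fun i _ => Nat.zero_le _) (Finset.mem_range.mpr hl)
    have := ha 0 hl
    omega
  obtain ⟨m, hn⟩ : ∃ m, n = m + 2 := ⟨n - 2, by omega⟩
  -- the multiset of roots (negated)
  set t : Multiset ℚ :=
    (Finset.range l).val.bind (fun k =>
      (Finset.range (a k)).val.map (fun j : ℕ => ((j:ℚ)+1)/(a k))) with ht
  have hcard : Multiset.card t = n := by
    rw [ht, Multiset.card_bind, ← hsum, Finset.sum_eq_multiset_sum]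
    congr 1
    apply Multiset.map_congr rfl
    intro k _
    simp
  -- product over t equals the double finset product
  have hQ : (t.map fun r => X + C r).prod
      = ∏ k ∈ Finset.range l, ∏ j ∈ Finset.range (a k), (X + C (((j:ℚ)+1)/(a k))) := by
    rw [ht, Multiset.map_bind, Multiset.prod_bind, Finset.prod_eq_multiset_prod]
    congr 1
    apply Multiset.map_congr rfl
    intro k _
    rw [Multiset.map_map, Finset.prod_eq_multiset_prod]
    rfl
  -- factorization
  have hfac : ∏ k ∈ Finset.range l, ∏ j ∈ Finset.range (a k),
        (C (a k : ℚ) * X + C ((j : ℚ) + 1))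
      = C (∏ k ∈ Finset.range l, (a k : ℚ) ^ (a k)) * (t.map fun r => X + C r).prod := by
    rw [hQ, map_prod, ← Finset.prod_mul_distrib]
    apply Finset.prod_congr rfl
    intro k hk
    have hkl := Finset.mem_range.mp hk
    calc ∏ j ∈ Finset.range (a k), (C (a k : ℚ) * X + C ((j : ℚ) + 1))
        = ∏ j ∈ Finset.range (a k), (C (a k : ℚ) * (X + C (((j:ℚ)+1)/(a k)))) := by
          apply Finset.prod_congr rfl
          intro j _
          rw [mul_add, ← C_mul, mul_div_cancel₀ _ (hane k hkl)]
      _ = (∏ _j ∈ Finset.range (a k), C (a k : ℚ)) *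
            ∏ j ∈ Finset.range (a k), (X + C (((j:ℚ)+1)/(a k))) := Finset.prod_mul_distrib
      _ = C ((a k : ℚ) ^ (a k)) * ∏ j ∈ Finset.range (a k), (X + C (((j:ℚ)+1)/(a k))) := by
          rw [Finset.prod_const, Finset.card_range, ← C_pow]
  -- cancel C A
  have hAne : (∏ k ∈ Finset.range l, (a k : ℚ) ^ (a k)) ≠ 0 := by
    apply Finset.prod_ne_zero_iff.mpr
    intro k hk
    exact pow_ne_zero _ (hane k (Finset.mem_range.mp hk))
  have hQS : (t.map fun r => X + C r).prod
      = ∑ s ∈ Finset.range (n + 1), C (ξ s) * X ^ s := by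
    apply mul_left_cancel₀ (C_ne_zero.mpr hAne)
    rw [← hfac, hxi]
  -- coefficient extraction
  have hS : ∀ s ≤ n, ((t.map fun r => X + C r).prod).coeff s = ξ s := by
    intro s hs
    rw [hQS, finset_sum_coeff]
    simp only [coeff_C_mul, coeff_X_pow, mul_ite, mul_one, mul_zero]
    rw [Finset.sum_ite_eq (Finset.range (n+1)) s ξ]
    simp [Nat.lt_succ_of_le hs]
  -- sums over t
  have ht_sum : t.sum = ((n:ℚ) + l) / 2 := by
    rw [ht, Multiset.sum_bind]
    have : ∀ k ∈ (Finset.range l).val,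
        ((Finset.range (a k)).val.map (fun j : ℕ => ((j:ℚ)+1)/(a k))).sum
          = ((a k : ℚ) + 1) / 2 := by
      intro k hk
      have hkl : k < l := Finset.mem_range.mp hk
      rw [← Finset.sum_eq_multiset_sum]
      rw [← Finset.sum_div, sum1, mul_div_assoc, mul_div_cancel_left₀ _ (hane k hkl)]
    rw [Multiset.map_congr rfl this]
    rw [← Finset.sum_eq_multiset_sum]
    have hcast : ∑ k ∈ Finset.range l, ((a k : ℚ)) = (n : ℚ) := by
      rw [← hsum]; push_cast; rfl
    rw [← Finset.sum_div, Finset.sum_add_distrib, hcast, Finset.sum_const, Finset.card_range,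
      nsmul_eq_mul, mul_one]
  -- sum of squares over t
  have ht_sq : (t.map fun r => r^2).sum
      = (n:ℚ)/3 + (l:ℚ)/2 + (1/6) * ∑ r ∈ Finset.range l, 1/(a r : ℚ) := by
    rw [ht, Multiset.map_bind, Multiset.sum_bind]
    have hinner : ∀ k ∈ (Finset.range l).val,
        (Multiset.map (fun r : ℚ => r^2)
          (Multiset.map (fun j : ℕ => ((j:ℚ)+1)/(a k)) (Finset.range (a k)).val)).sum
          = (a k:ℚ)/3 + 1/2 + (1/6) * (1/(a k:ℚ)) := by
      intro k hk
      have hkl : k < l := Finset.mem_range.mp hk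
      have hne := hane k hkl
      rw [Multiset.map_map]
      rw [← Finset.sum_eq_multiset_sum]
      have : ∀ j ∈ Finset.range (a k),
          (((fun r => r^2) ∘ fun j : ℕ => ((j:ℚ)+1)/(a k)) j)
            = ((j:ℚ)+1)^2 / (a k:ℚ)^2 := by
        intro j _
        simp [div_pow]
      rw [Finset.sum_congr rfl this, ← Finset.sum_div, sum2]
      field_simp
      ring
    rw [Multiset.map_congr rfl hinner, ← Finset.sum_eq_multiset_sum]
    have hcast : ∑ k ∈ Finset.range l, ((a k : ℚ)) = (n : ℚ) := by
      rw [← hsum]; push_cast; rfl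
    rw [Finset.sum_add_distrib, Finset.sum_add_distrib, ← Finset.sum_div, hcast,
      Finset.sum_const, Finset.card_range, nsmul_eq_mul, ← Finset.mul_sum]
    ring
  -- conclude
  have hkey := key t m (by rw [hcard, hn])
  refine ⟨?_, ?_, ?_⟩
  · have h := hS n le_rfl
    rw [← h, hn]
    exact hkey.1
  · have h := hS (n-1) (by omega)
    have e : n - 1 = m + 1 := by omega
    rw [← h, e, hkey.2.1, ht_sum]
  · have h := hS (n-2) (by omega)
    have e : n - 2 = m := by omega
    rw [← h, e, hkey.2.2, ht_sum, ht_sq]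
    ring
end

section
/- Define polynomials H_{m,j}(X) ∈ Q[X] by H_{m,j} = 0 if m < 0 or j < 0 or j > m; H_{0,0} = 1; and H_{m,j}(X) = H_{m−1,j}(X) + (X−1)(X d/dX + (m−j)/n) H_{m−1,j−1}(X) for m ≥ 1, 0 ≤ j ≤ m. Then for all m ≥ 0: H_{m,0}(X) = 1, H_{m,1}(X) = (1/n)·C(m,2)·(X−1), and H_{m,2}(X) = (1/n²)·C(m,3)·((n+1)X − 1)(X−1) + (3/n²)·C(m,4)·(X−1)², where C(m,k) denotes the binomial coefficient. -/
open Polynomial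

noncomputable section

/-- The polynomials `H_{m,j} ∈ ℚ[X]` of Zagier–Zinger: `H_{0,0} = 1`, `H_{m,j} = 0` for
`j > m` (or negative indices), and for `m ≥ 1`, `0 ≤ j ≤ m`,
`H_{m,j} = H_{m−1,j} + (X−1)(X d/dX + (m−j)/n) H_{m−1,j−1}`. -/
def Hpoly (n : ℕ) : ℕ → ℕ → Polynomial ℚ
  | 0, 0 => 1
  | 0, _ + 1 => 0
  | m + 1, 0 => Hpoly n m 0
  | m + 1, j + 1 =>
    if j + 1 ≤ m + 1 then
      Hpoly n m (j + 1) +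
        (Polynomial.X - 1) *
          (Polynomial.X * Polynomial.derivative (Hpoly n m j) +
            Polynomial.C (((m : ℚ) - (j : ℚ)) / (n : ℚ)) * Hpoly n m j)
    else 0

end

lemma twoChoose (m : ℕ) : (2:ℚ) * m.choose 2 = m * (m - 1) := by
  induction m with
  | zero => simp
  | succ k ih =>
    rw [Nat.choose_succ_succ, Nat.choose_one_right]
    push_cast
    linear_combination ih

lemma threeChoose (m : ℕ) : (3:ℚ) * m.choose 3 = ((m:ℚ) - 2) * m.choose 2 := by
  induction m with
  | zero => simp
  | succ k ih =>
    rw [Nat.choose_succ_succ k 2, Nat.choose_succ_succ k 1, Nat.choose_one_right]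
    have h2 := twoChoose k
    push_cast
    linear_combination ih + h2

set_option maxHeartbeats 1000000 in
/-- eq. (Hlow_e). For all `m ≥ 0`: `H_{m,0} = 1`,
`H_{m,1} = (1/n)·C(m,2)·(X−1)`, and
`H_{m,2} = (1/n²)·C(m,3)·((n+1)X − 1)(X−1) + (3/n²)·C(m,4)·(X−1)²`. -/
theorem Hpoly_low (n : ℕ) (hn : 0 < n) (m : ℕ) :
    Hpoly n m 0 = 1 ∧
    Hpoly n m 1 = Polynomial.C ((1 / (n : ℚ)) * (m.choose 2 : ℚ)) * (Polynomial.X - 1) ∧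
    Hpoly n m 2 =
      Polynomial.C ((1 / (n : ℚ) ^ 2) * (m.choose 3 : ℚ)) *
          ((((n : ℚ) + 1) • Polynomial.X - 1) * (Polynomial.X - 1)) +
        Polynomial.C ((3 / (n : ℚ) ^ 2) * (m.choose 4 : ℚ)) * (Polynomial.X - 1) ^ 2 := by
  have hn' : (n : ℚ) ≠ 0 := Nat.cast_ne_zero.mpr hn.ne'
  have hC : ((n : ℚ[X])) * Polynomial.C ((n : ℚ))⁻¹ = 1 := by
    rw [← Polynomial.C_eq_natCast, ← Polynomial.C_mul, mul_inv_cancel₀ hn', Polynomial.C_1]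
  induction m with
  | zero =>
    refine ⟨rfl, ?_, ?_⟩
    · rw [show Hpoly n 0 1 = 0 from Hpoly.eq_2 n 0]; simp
    · rw [show Hpoly n 0 2 = 0 from Hpoly.eq_2 n 1]; simp
  | succ k ih =>
    obtain ⟨ih0, ih1, ih2⟩ := ih
    refine ⟨ih0, ?_, ?_⟩
    · rw [show Hpoly n (k+1) 1 = _ from Hpoly.eq_4 n k 0, if_pos (by omega),
        ih0, ih1, Nat.choose_succ_succ k 1, Nat.choose_one_right]
      simp only [derivative_one, mul_zero, mul_one, Nat.cast_zero, sub_zero,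
        one_div, div_eq_mul_inv, map_mul, map_natCast, zero_add, Polynomial.C_1]
      push_cast
      ring
    · rw [show Hpoly n (k+1) 2 = _ from Hpoly.eq_4 n k 1]
      by_cases hk : 1 + 1 ≤ k + 1
      · rw [if_pos hk, ih1, ih2, Nat.choose_succ_succ k 2, Nat.choose_succ_succ k 3]
        have h3 := congrArg Polynomial.C (threeChoose k)
        simp only [map_mul, map_sub, map_natCast, map_ofNat] at h3
        simp only [derivative_mul, derivative_sub, derivative_X, derivative_one, derivative_C, Polynomial.derivative_natCast, Polynomial.C_1,
          sub_zero, zero_mul, zero_add, mul_one, smul_eq_C_mul,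
          one_div, div_eq_mul_inv, ← inv_pow, map_mul, map_pow, map_natCast, map_add,
          map_sub, map_one, map_ofNat, Nat.cast_add, Nat.cast_one]
        linear_combination (- Polynomial.C ((n:ℚ))⁻¹ * (k.choose 2 : ℚ[X]) * X * (X-1)) * hC
          - (Polynomial.C ((n:ℚ))⁻¹ ^ 2 * (X-1)^2) * h3
      · rw [if_neg hk]
        have hk0 : k = 0 := by omega
        subst hk0
        simp [Nat.choose]
end
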